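/- arXiv:2408.15841 — 4 statements merged into one kernel-verified Lean document; each statement's English description precedes it below -/
import Mathlib

section
/- Let H be a finite Frobenius complement of even order. Then H contains a unique involution, and this involution is central in H. -/
/-- `H` is a Frobenius complement: it admits a fixed-point-free action (by automorphisms)
on some nontrivial finite group `K`. -/
def IsFrobeniusComplement (H : Type) [Group H] : Prop :=
  ∃ (K : Type) (_ : Group K) (_ : Finite K) (_ : Nontrivial K) (φ : H →* MulAut K),
    ∀ h : H, h ≠ 1 → ∀ k : K, φ h k = k → k = 1

/-- A Frobenius complement of even order has a unique involution, which is central. -/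
theorem frobeniusComplement_unique_involution (H : Type) [Group H] [Finite H]
    (hH : IsFrobeniusComplement H) (heven : Even (Nat.card H)) :
    ∃ z : H, orderOf z = 2 ∧ z ∈ Subgroup.center H ∧ ∀ w : H, orderOf w = 2 → w = z := by
  obtain ⟨K, _, _, _, φ, hφ⟩ := hH
  have : Fintype H := Fintype.ofFinite H
  obtain ⟨z, hz⟩ := exists_prime_orderOf_dvd_card (G := H) 2
    (by rwa [even_iff_two_dvd, Nat.card_eq_fintype_card] at heven)
  -- key: any involution acts as inversion on K
  have key : ∀ w : H, orderOf w = 2 → ∀ k : K, φ w k = k⁻¹ := by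
    intro w hw
    have hw1 : w ≠ 1 := by
      intro h; rw [h, orderOf_one] at hw; norm_num at hw
    have hww : w * w = 1 := by
      have := pow_orderOf_eq_one w; rwa [hw, pow_two] at this
    have hinj : Function.Injective (fun k : K => k⁻¹ * φ w k) := by
      intro a b hab
      simp only at hab
      have h1 : φ w (b * a⁻¹) = b * a⁻¹ := by
        have h2 : (φ w) b * ((φ w) a)⁻¹ = b * a⁻¹ := by
          have := congrArg (fun x => b * x * ((φ w) a)⁻¹) hab
          simpa [mul_assoc] using this.symm
        rw [map_mul, map_inv, h2]
      have := hφ w hw1 _ h1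
      have h4 : b = a := by rwa [mul_inv_eq_one] at this
      exact h4.symm
    have hsurj : Function.Surjective (fun k : K => k⁻¹ * φ w k) :=
      Finite.surjective_of_injective hinj
    intro k
    obtain ⟨x, hx⟩ := hsurj k
    simp only at hx
    have hxx : φ w (φ w x) = x := by
      rw [← MulAut.mul_apply, ← map_mul, hww, map_one, MulAut.one_apply]
    calc φ w k = φ w (x⁻¹ * φ w x) := by rw [hx]
    _ = (φ w x)⁻¹ * x := by rw [map_mul, map_inv, hxx]
    _ = k⁻¹ := by rw [← hx]; group
  have uniq : ∀ w : H, orderOf w = 2 → w = z := by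
    intro w hw
    have hzz : z * z = 1 := by
      have := pow_orderOf_eq_one z; rwa [hz, pow_two] at this
    have hfix : ∀ k : K, φ (z * w) k = k := by
      intro k
      rw [map_mul, MulAut.mul_apply, key w hw k, key z hz k⁻¹, inv_inv]
    have hzw : z * w = 1 := by
      by_contra h
      obtain ⟨k, hk⟩ := exists_ne (1 : K)
      exact hk (hφ _ h k (hfix k))
    calc w = z⁻¹ * (z * w) := by group
    _ = z⁻¹ := by rw [hzw, mul_one]
    _ = z := by rw [inv_eq_iff_mul_eq_one, hzz]
  refine ⟨z, hz, Subgroup.mem_center_iff.mpr fun g => ?_, uniq⟩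
  have hconj : orderOf (g * z * g⁻¹) = 2 := by
    rw [show g * z * g⁻¹ = (MulAut.conj g) z from rfl, MulEquiv.orderOf_eq, hz]
  have := uniq _ hconj
  calc g * z = (g * z * g⁻¹) * g := by group
  _ = z * g := by rw [this]
end

section
/- Let H be a finite group acting on an elementary abelian p-group K (viewed as an H-module over F_p), and suppose K has the k-eigenvalue property: there exists a ∈ F_p^× of order k such that for every v ∈ K there is h ∈ H with h·v = a·v. Then the dual module Irr(K) = Hom(K, ℂ^×), with the induced H-action, also has the k-eigenvalue property. -/
/-- Rank-nullity over a finite field: the kernel of the dual map has the same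
cardinality as the kernel. -/
theorem card_ker_dualMap (p : ℕ) [Fact p.Prime] (V : Type) [AddCommGroup V]
    [Module (ZMod p) V] [Finite V] (T : V →ₗ[ZMod p] V) :
    Nat.card (LinearMap.ker T.dualMap) = Nat.card (LinearMap.ker T) := by
  classical
  have : Module.Finite (ZMod p) V := Module.Finite.of_finite
  have := Fintype.ofFinite V
  have h1 : LinearMap.ker T.dualMap = (LinearMap.range T).dualAnnihilator :=
    LinearMap.ker_dualMap_eq_dualAnnihilator_range T
  have e : (V ⧸ LinearMap.range T) ≃ₗ[ZMod p] (LinearMap.range T).dualAnnihilator :=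
    Subspace.quotEquivAnnihilator _
  rw [h1, ← Nat.card_congr e.toEquiv]
  have hr : Module.finrank (ZMod p) (V ⧸ LinearMap.range T)
      = Module.finrank (ZMod p) (LinearMap.ker T) := by
    have h2 := Submodule.finrank_quotient_add_finrank (LinearMap.range T)
    have h3 := LinearMap.finrank_range_add_finrank_ker T
    omega
  have f1 := Module.card_eq_pow_finrank (K := ZMod p) (V := V ⧸ LinearMap.range T)
  have f2 := Module.card_eq_pow_finrank (K := ZMod p) (V := LinearMap.ker T)
  rw [Nat.card_eq_fintype_card, Nat.card_eq_fintype_card, f1, f2, hr]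

/-- Double counting: swap the order of summation for counting pairs. -/
theorem sum_card_swap {G α : Type} [Fintype G] [Fintype α] (E : G → α → Prop) :
    ∑ x : α, Nat.card {g // E g x} = ∑ g : G, Nat.card {x // E g x} := by
  classical
  simp only [Nat.card_eq_fintype_card, Fintype.card_subtype, Finset.card_filter]
  exact Finset.sum_comm

/-- Counting lemma: if the set of `g` with `E g x` is empty or of the same size as the
set of `g` with `F g x`, every `x` satisfies `F` for some `g`, and the total counts
agree, then every `x` satisfies `E` for some `g`. -/
theorem count_cover {G α : Type} [Fintype G] [Fintype α] (E F : G → α → Prop)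
    (hcard : ∀ x : α, (∃ g, E g x) → Nat.card {g // E g x} = Nat.card {g // F g x})
    (hF : ∀ x, ∃ g, F g x)
    (hsum : ∑ x : α, Nat.card {g // E g x} = ∑ x : α, Nat.card {g // F g x}) :
    ∀ x, ∃ g, E g x := by
  classical
  by_contra hc
  push_neg at hc
  obtain ⟨x₀, hx₀⟩ := hc
  have hle : ∀ x ∈ Finset.univ (α := α),
      Nat.card {g // E g x} ≤ Nat.card {g // F g x} := by
    intro x _
    by_cases hx : ∃ g, E g x
    · exact le_of_eq (hcard x hx)
    · have : IsEmpty {g // E g x} := ⟨fun ⟨g, hg⟩ => hx ⟨g, hg⟩⟩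
      simp [Nat.card_of_isEmpty]
  have hlt : Nat.card {g // E g x₀} < Nat.card {g // F g x₀} := by
    have h0 : IsEmpty {g // E g x₀} := ⟨fun ⟨g, hg⟩ => hx₀ g hg⟩
    have h1 : 0 < Nat.card {g // F g x₀} := by
      have : Nonempty {g // F g x₀} := ⟨⟨(hF x₀).choose, (hF x₀).choose_spec⟩⟩
      exact Nat.card_pos
    simpa [Nat.card_of_isEmpty] using h1
  have := Finset.sum_lt_sum hle ⟨x₀, Finset.mem_univ x₀, hlt⟩
  omega

/-- If an `F_p H`-module `V` has the `k`-eigenvalue property (witnessed by a unit `a` of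
order `k`), then so does its dual module. -/
theorem dual_eigenvalue_property (p : ℕ) [Fact p.Prime] (H V : Type) [Group H] [Finite H]
    [AddCommGroup V] [Module (ZMod p) V] [Finite V]
    (φ : Representation (ZMod p) H V) (k : ℕ)
    (a : (ZMod p)ˣ) (ha : orderOf a = k)
    (hev : ∀ v : V, ∃ h : H, φ h v = (a : ZMod p) • v) :
    ∃ b : (ZMod p)ˣ, orderOf b = k ∧
      ∀ f : Module.Dual (ZMod p) V, ∃ h : H, f ∘ₗ φ h = (b : ZMod p) • f := by
  classical
  have := Fintype.ofFinite V
  have := Fintype.ofFinite H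
  have hfinD : Finite (Module.Dual (ZMod p) V) :=
    Finite.of_injective (fun f => (f : V → ZMod p)) DFunLike.coe_injective
  have := Fintype.ofFinite (Module.Dual (ZMod p) V)
  set c : ZMod p := (a : ZMod p) with hc
  -- per-element linear algebra: eigenspaces for `h` on `V` and on the dual have the
  -- same cardinality, for any scalar `d`.
  have key : ∀ (d : ZMod p) (h : H),
      Nat.card {v : V // φ h v = d • v}
        = Nat.card {f : Module.Dual (ZMod p) V // f ∘ₗ φ h = d • f} := by
    intro d h
    set T : V →ₗ[ZMod p] V := φ h - d • LinearMap.id with hT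
    have e1 : Nat.card {v : V // φ h v = d • v} = Nat.card (LinearMap.ker T) := by
      apply Nat.card_congr
      apply Equiv.subtypeEquivRight
      intro v
      simp [hT, LinearMap.mem_ker, sub_eq_zero]
    have e2 : Nat.card {f : Module.Dual (ZMod p) V // f ∘ₗ φ h = d • f}
        = Nat.card (LinearMap.ker T.dualMap) := by
      apply Nat.card_congr
      apply Equiv.subtypeEquivRight
      intro f
      rw [LinearMap.mem_ker, LinearMap.ext_iff, LinearMap.ext_iff]
      constructor
      · intro hf v
        have := hf v
        simp only [LinearMap.dualMap_apply, LinearMap.comp_apply, hT,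
          LinearMap.sub_apply, LinearMap.smul_apply, LinearMap.id_apply, map_sub,
          map_smul, LinearMap.zero_apply, smul_eq_mul] at this ⊢
        rw [sub_eq_zero]
        simpa using this
      · intro hf v
        have := hf v
        simp only [LinearMap.dualMap_apply, LinearMap.comp_apply, hT,
          LinearMap.sub_apply, LinearMap.smul_apply, LinearMap.id_apply, map_sub,
          map_smul, LinearMap.zero_apply, smul_eq_mul, sub_eq_zero] at this ⊢
        simpa using this
    rw [e1, e2, card_ker_dualMap]
  -- sums over h of eigenspace sizes agree between V and its dual
  have hsum_d : ∀ d : ZMod p,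
      ∑ h : H, Nat.card {v : V // φ h v = d • v}
        = ∑ h : H, Nat.card {f : Module.Dual (ZMod p) V // f ∘ₗ φ h = d • f} :=
    fun d => Finset.sum_congr rfl (fun h _ => key d h)
  -- from the hypothesis: the `a`-eigen count on V equals the fixed-point count on V
  have hVsum : ∑ v : V, Nat.card {h : H // φ h v = c • v}
      = ∑ v : V, Nat.card {h : H // φ h v = (1 : ZMod p) • v} := by
    apply Finset.sum_congr rfl
    intro v _
    obtain ⟨h₀, hh₀⟩ := hev v
    apply Nat.card_congr
    refine Equiv.subtypeEquiv (Equiv.mulLeft h₀⁻¹) ?_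
    intro h
    simp only [Equiv.coe_mulLeft, one_smul]
    constructor
    · intro hh
      have : φ (h₀⁻¹ * h) v = φ h₀⁻¹ (φ h v) := by
        rw [map_mul]; rfl
      rw [this, hh, ← hh₀, ← LinearMap.comp_apply, ← Module.End.mul_eq_comp, ← map_mul,
        inv_mul_cancel, map_one]
      rfl
    · intro hh
      have : φ h v = φ h₀ (φ (h₀⁻¹ * h) v) := by
        rw [← LinearMap.comp_apply, ← Module.End.mul_eq_comp, ← map_mul,
          mul_inv_cancel_left]
      rw [this, hh, hh₀]
  -- chain of equalities giving the dual statement's count identity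
  have hDsum : ∑ f : Module.Dual (ZMod p) V, Nat.card {h : H // f ∘ₗ φ h = c • f}
      = ∑ f : Module.Dual (ZMod p) V,
          Nat.card {h : H // f ∘ₗ φ h = (1 : ZMod p) • f} := by
    rw [sum_card_swap (fun h f => f ∘ₗ φ h = c • f),
      sum_card_swap (fun h f => f ∘ₗ φ h = (1 : ZMod p) • f),
      ← hsum_d c, ← hsum_d 1, ← sum_card_swap (fun h (v : V) => φ h v = c • v),
      ← sum_card_swap (fun h (v : V) => φ h v = (1 : ZMod p) • v), hVsum]
  refine ⟨a, ha, ?_⟩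
  refine count_cover (fun h f => f ∘ₗ φ h = c • f)
    (fun h f => f ∘ₗ φ h = (1 : ZMod p) • f) ?_ ?_ hDsum
  · -- coset bijection on the dual side
    intro f hEf
    obtain ⟨h₀, hh₀⟩ := hEf
    have hh₀ : f ∘ₗ φ h₀ = c • f := hh₀
    apply Nat.card_congr
    refine Equiv.subtypeEquiv (Equiv.mulRight h₀⁻¹) ?_
    intro h
    simp only [Equiv.coe_mulRight, one_smul]
    have hci1 : ((a⁻¹ : (ZMod p)ˣ) : ZMod p) * c = 1 := by
      rw [hc, ← Units.val_mul, inv_mul_cancel, Units.val_one]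
    have hci2 : c * ((a⁻¹ : (ZMod p)ˣ) : ZMod p) = 1 := by
      rw [hc, ← Units.val_mul, mul_inv_cancel, Units.val_one]
    have hinv : f ∘ₗ φ h₀⁻¹ = ((a⁻¹ : (ZMod p)ˣ) : ZMod p) • f := by
      have hcomp : (f ∘ₗ φ h₀) ∘ₗ φ h₀⁻¹ = f := by
        rw [LinearMap.comp_assoc, ← Module.End.mul_eq_comp, ← map_mul, mul_inv_cancel,
          map_one, Module.End.one_eq_id, LinearMap.comp_id]
      rw [hh₀, LinearMap.smul_comp] at hcomp
      calc f ∘ₗ φ h₀⁻¹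
          = ((a⁻¹ : (ZMod p)ˣ) : ZMod p) • (c • (f ∘ₗ φ h₀⁻¹)) := by
            rw [smul_smul, hci1, one_smul]
        _ = ((a⁻¹ : (ZMod p)ˣ) : ZMod p) • f := by rw [hcomp]
    constructor
    · intro hh
      have hstep : f ∘ₗ φ (h * h₀⁻¹) = (f ∘ₗ φ h) ∘ₗ φ h₀⁻¹ := by
        rw [LinearMap.comp_assoc, ← Module.End.mul_eq_comp, ← map_mul]
      rw [hstep, hh, LinearMap.smul_comp, hinv, smul_smul, hci2, one_smul]
    · intro hh
      have hstep : f ∘ₗ φ h = (f ∘ₗ φ (h * h₀⁻¹)) ∘ₗ φ h₀ := by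
        rw [LinearMap.comp_assoc, ← Module.End.mul_eq_comp, ← map_mul,
          inv_mul_cancel_right]
      rw [hstep, hh, hh₀]
  · intro f
    exact ⟨1, by simp [Module.End.one_eq_id]⟩
end

section
/- Let G be a finite 2-group of nilpotency class at most 2 that is semi-rational. Then both the center Z(G) and the quotient G/Z(G) have exponent dividing 4. -/
/-!
Fix `x` and a subgroup `H` containing `x ^ (b - a)` whenever `x ^ a` and `x ^ b` are conjugate:
`H = 1` when `x` is central, and `H = Z(G)` for every `x` when `G' ≤ Z(G)`. Since `3` and `5` are
prime to the order of `x`, semi-rationality puts `x, x ^ 3, x ^ 5` into at most two conjugacy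
classes. Hence `3 ~ 1`, `5 ~ 1` or `3 ~ 5`, and the differences `2`, `4`, `2` all give `x ^ 4 ∈ H`.
-/

/-- `x` is a semi-rational element of `G`. -/
def IsSemiRationalElt {G : Type} [Group G] (x : G) : Prop :=
  ∃ r : ℤ, Int.gcd r (orderOf x) = 1 ∧ ∀ j : ℤ, Int.gcd j (orderOf x) = 1 →
    IsConj (x ^ j) x ∨ IsConj (x ^ j) (x ^ r)

/-- `G` is semi-rational if all its elements are semi-rational. -/
def IsSemiRatGroup (G : Type) [Group G] : Prop := ∀ x : G, IsSemiRationalElt x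

section

variable {G : Type} [Group G]

lemma IsPGroup.gcd_orderOf_eq_one {p : ℕ} (hG : IsPGroup p G) (x : G) {j : ℤ}
    (hj : Int.gcd j p = 1) : Int.gcd j (orderOf x) = 1 := by
  obtain ⟨n, hn⟩ := hG x
  exact Nat.Coprime.coprime_dvd_right (orderOf_dvd_of_pow_eq_one hn) (Nat.Coprime.pow_right n hj)

lemma zpow_sub_mem_center_of_isConj (hclass : commutator G ≤ Subgroup.center G) (x : G)
    {a b : ℤ} (h : IsConj (x ^ a) (x ^ b)) : x ^ (b - a) ∈ Subgroup.center G := by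
  obtain ⟨c, hc⟩ := isConj_iff.mp h
  have hcomm : c * x ^ a * c⁻¹ * (x ^ a)⁻¹ ∈ commutator G :=
    Subgroup.commutator_mem_commutator (Subgroup.mem_top c) (Subgroup.mem_top (x ^ a))
  simpa only [zpow_sub, ← hc] using hclass hcomm

lemma zpow_sub_eq_one_of_isConj {z : G} (hz : z ∈ Subgroup.center G) {a b : ℤ}
    (h : IsConj (z ^ a) (z ^ b)) : z ^ (b - a) = 1 := by
  rw [zpow_sub, h.eq_of_left_mem_center (zpow_mem hz a), mul_inv_cancel]

lemma IsSemiRationalElt.zpow_four_mem {x : G} (hx : IsSemiRationalElt x)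
    (h3 : Int.gcd 3 (orderOf x) = 1) (h5 : Int.gcd 5 (orderOf x) = 1) {H : Subgroup G}
    (hH : ∀ a b : ℤ, IsConj (x ^ a) (x ^ b) → x ^ (b - a) ∈ H) : x ^ (4 : ℤ) ∈ H := by
  obtain ⟨r, -, hr⟩ := hx
  rcases hr 3 h3 with h31 | h3r
  · have hx2 : x ^ (1 - 3 : ℤ) ∈ H := hH 3 1 (by rwa [zpow_one])
    rw [show (4 : ℤ) = (1 - 3) * -2 by norm_num, zpow_mul]
    exact zpow_mem hx2 _
  rcases hr 5 h5 with h51 | h5r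
  · have hx4 : x ^ (1 - 5 : ℤ) ∈ H := hH 5 1 (by rwa [zpow_one])
    rw [show (4 : ℤ) = -(1 - 5) by norm_num, zpow_neg]
    exact inv_mem hx4
  · have hx2 : x ^ (r - 3) * (x ^ (r - 5))⁻¹ ∈ H := mul_mem (hH 3 r h3r) (inv_mem (hH 5 r h5r))
    rw [← zpow_neg, ← zpow_add, show r - 3 + -(r - 5) = 2 by ring] at hx2
    rw [show (4 : ℤ) = 2 * 2 by norm_num, zpow_mul]
    exact zpow_mem hx2 _

end

theorem center_and_quotient_exponent_four_general (G : Type) [Group G]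
    (h2 : IsPGroup 2 G) (hclass : commutator G ≤ Subgroup.center G)
    (hsr : IsSemiRatGroup G) :
    (∀ z ∈ Subgroup.center G, z ^ 4 = 1) ∧
    (∀ q : G ⧸ Subgroup.center G, q ^ 4 = 1) := by
  have h3 (x : G) : Int.gcd 3 (orderOf x) = 1 := h2.gcd_orderOf_eq_one x (by decide)
  have h5 (x : G) : Int.gcd 5 (orderOf x) = 1 := h2.gcd_orderOf_eq_one x (by decide)
  constructor
  · intro z hz
    have hz4 : z ^ (4 : ℤ) ∈ (⊥ : Subgroup G) :=
      (hsr z).zpow_four_mem (h3 z) (h5 z) fun a b h ↦ zpow_sub_eq_one_of_isConj hz h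
    exact_mod_cast Subgroup.mem_bot.mp hz4
  · refine fun q ↦ QuotientGroup.induction_on q fun x ↦ ?_
    have hx4 : x ^ (4 : ℤ) ∈ Subgroup.center G :=
      (hsr x).zpow_four_mem (h3 x) (h5 x) fun a b h ↦ zpow_sub_mem_center_of_isConj hclass x h
    rw [← QuotientGroup.mk_pow, QuotientGroup.eq_one_iff]
    exact_mod_cast hx4

/-- In a semi-rational finite 2-group of nilpotency class at most 2, both the center and
the central quotient have exponent dividing 4. -/
theorem center_and_quotient_exponent_four (G : Type) [Group G] [Finite G]
    (h2 : IsPGroup 2 G) (hclass : commutator G ≤ Subgroup.center G)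
    (hsr : IsSemiRatGroup G) :
    (∀ z ∈ Subgroup.center G, z ^ 4 = 1) ∧
    (∀ q : G ⧸ Subgroup.center G, q ^ 4 = 1) :=
  center_and_quotient_exponent_four_general G h2 hclass hsr
end

section
/- Let G = K ⋊ H be a Frobenius group whose kernel K is abelian with π(K) = {3,5}, complement H of even order, such that K contains minimal normal subgroups V₁ (a 3-group) and V₂ (a 5-group) of G with W = V₁V₂ of exponent 15. If G is quadratic rational, then H contains an element h such that h stabilizes a cyclic subgroup of order 15 of Irr(W) and h² centralizes an element of order 3 of Irr(W), contradicting the fixed-point-freeness of the action of H on Irr(W); hence the kernel of a quadratic rational Frobenius group with complement of even order cannot have both 3 and 5 dividing its order. -/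
open scoped Classical
open CategoryTheory IntermediateField

/-- A finite group is *quadratic rational* if every irreducible complex character has
field of values of degree at most 2 over `ℚ`. -/
def IsQuadRat (G : Type) [Group G] : Prop :=
  ∀ V : FDRep ℂ G, Simple V →
    Module.finrank ℚ ↥(IntermediateField.adjoin ℚ (Set.range (FDRep.character V))) ≤ 2

/-!
Let `θ` be a character of `K` of order 15 and `χ` the character of `K ⋊ H` induced from `θ`.
Since `H` acts fixed-point-freely on the dual group of `K`, the `H`-conjugates of `θ` are
pairwise distinct, so `χ` is irreducible; its values lie in `ℚ(ζ₁₅)`. As `[ℚ(χ) : ℚ] ≤ 2`, the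
eight embeddings `ζ₁₅ ↦ ζ₁₅ ^ t`, `t ∈ (ℤ/15)ˣ`, restrict to at most two embeddings of `ℚ(χ)`,
so two of them with `u ≠ ±v` agree on `χ`. Orthogonality of the characters of `K` turns this
into some `h ∈ H` moving `θ` to `θ ^ s`, where `s = v / u ≠ ±1` and `s ^ 2 ∈ {1, 4}`. If `s ^ 2 = 4`, then
`h ^ 2` fixes the character `θ ^ 5` of order 3, so `h ^ 2 = 1` and `θ = θ ^ 4`, which is absurd.
If `s ^ 2 = 1`, then `h ^ 2` fixes `θ`, so `h` acts as a fixed-point-free involution, that is,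
as inversion, and `s = -1`.
-/

open Finset

section Characters

variable {K R : Type*} [Group K] [Fintype K] [CommRing R] [IsDomain R]

theorem sum_apply_mul_inv_apply (α β : K →* Rˣ) :
    ∑ k, (α k : R) * ((β k)⁻¹ : Rˣ) = if α = β then (Fintype.card K : R) else 0 := by
  have h := sum_hom_units ((Units.coeHom R).comp (α / β))
  simp only [MonoidHom.coe_comp, Function.comp_apply, Units.coeHom_apply,
    MonoidHom.div_apply, div_eq_mul_inv, Units.val_mul] at h
  have hc : (Units.coeHom R).comp (α / β) = 1 ↔ α = β := by
    refine ⟨fun h1 => ?_, fun h1 => by ext; simp [h1]⟩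
    ext k
    exact congrArg Units.val (by simpa [div_eq_one] using DFunLike.congr_fun h1 k)
  simp only [h, hc, Nat.cast_ite, Nat.cast_zero]

theorem sum_sum_apply_mul_inv_apply {ι : Type*} [Fintype ι] (α : ι → K →* Rˣ) (β : K →* Rˣ) :
    ∑ k, (∑ i, (α i k : R)) * ((β k)⁻¹ : Rˣ) = #{i | α i = β} * Fintype.card K := by
  simp_rw [Finset.sum_mul]
  rw [Finset.sum_comm]
  simp_rw [sum_apply_mul_inv_apply]
  rw [← Finset.sum_filter, Finset.sum_const, nsmul_eq_mul]

theorem card_filter_eq_of_sum_apply_eq [CharZero R] {ι : Type*} [Fintype ι]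
    {α γ : ι → K →* Rˣ} (h : ∀ k, ∑ i, (α i k : R) = ∑ i, (γ i k : R)) (β : K →* Rˣ) :
    #{i | α i = β} = #{i | γ i = β} := by
  have hsum := sum_sum_apply_mul_inv_apply α β
  simp_rw [h, sum_sum_apply_mul_inv_apply] at hsum
  exact_mod_cast (mul_right_cancel₀ (by simp) hsum).symm

end Characters

theorem exists_orderOf_eq_mul_of_prime_dvd_card {K : Type*} [CommGroup K] [Finite K] {p q : ℕ}
    (hp : p.Prime) (hq : q.Prime) (hpq : p ≠ q) (hpK : p ∣ Nat.card K) (hqK : q ∣ Nat.card K) :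
    ∃ g : K, orderOf g = p * q := by
  have := Fact.mk hp
  have := Fact.mk hq
  obtain ⟨a, ha⟩ := exists_prime_orderOf_dvd_card' p hpK
  obtain ⟨b, hb⟩ := exists_prime_orderOf_dvd_card' q hqK
  refine ⟨a * b, ?_⟩
  rw [(Commute.all a b).orderOf_mul_eq_mul_orderOf_of_coprime, ha, hb]
  rwa [ha, hb, Nat.coprime_primes hp hq]

theorem exists_monoidHom_orderOf_eq {K : Type*} [CommGroup K] [Finite K] (g : K) :
    ∃ θ : K →* ℂˣ, orderOf θ = orderOf g := by
  have : NeZero (Monoid.exponent K) := ⟨Monoid.exponent_ne_zero_of_finite⟩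
  obtain ⟨e⟩ := CommGroup.monoidHom_mulEquiv_of_hasEnoughRootsOfUnity K ℂ
  exact ⟨e.symm g, e.symm.orderOf_eq g⟩

theorem MonoidHom.FixedPointFree.eq_one_of_invariant {K M F : Type*} [Group K] [Finite K]
    [Group M] [FunLike F K K] [MonoidHomClass F K K] {σ : F} (hσ : FixedPointFree σ)
    {μ : K →* M} (hμ : ∀ k, μ (σ k) = μ k) : μ = 1 := by
  ext k
  obtain ⟨g, rfl⟩ := hσ.commutatorMap_surjective k
  simp [hμ]

section DualAction

variable {K H M : Type*} [Group K] [Group H] [CommGroup M]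

def dualAction (φ : H →* MulAut K) : H →* MulAut (K →* M) where
  toFun x := (φ x).monoidHomCongrLeft
  map_one' := by ext; simp [MulAut.one_def]
  map_mul' x y := by ext; simp [MulAut.mul_def]

variable {φ : H →* MulAut K}

@[simp]
theorem dualAction_apply (x : H) (μ : K →* M) (k : K) : dualAction φ x μ k = μ (φ x⁻¹ k) := by
  simp [dualAction, map_inv]

theorem fixedPointFree_dualAction [Finite K] {x : H}
    (hx : MonoidHom.FixedPointFree (φ x⁻¹)) : MonoidHom.FixedPointFree (dualAction (M := M) φ x) :=
  fun μ hμ => hx.eq_one_of_invariant fun k => by simpa using DFunLike.congr_fun hμ k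

theorem dualAction_injective_of_stabilizer {θ : K →* M}
    (hstab : ∀ x, dualAction φ x θ = θ → x = 1) : Function.Injective fun x => dualAction φ x θ := by
  intro x y hxy
  have : dualAction φ (y⁻¹ * x) θ = θ := by
    simp only at hxy
    rw [map_mul, MulAut.mul_apply, hxy, ← MulAut.mul_apply, ← map_mul, inv_mul_cancel, map_one,
      MulAut.one_apply]
  exact (inv_mul_eq_one.mp (hstab _ this)).symm

end DualAction

section InducedRep

variable {K H : Type} [Group K] [Group H] (φ : H →* MulAut K) (θ : K →* ℂˣ)

noncomputable def inducedCharRep : Representation ℂ (K ⋊[φ] H) (H → ℂ) where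
  toFun g :=
    { toFun f x := (dualAction φ x θ g.left : ℂ) * f (g.right⁻¹ * x)
      map_add' f₁ f₂ := by ext; simp [mul_add]
      map_smul' c f := by ext; simp [mul_left_comm] }
  map_one' := by ext; simp
  map_mul' g₁ g₂ := by
    ext f x
    simp only [LinearMap.coe_mk, AddHom.coe_mk, Module.End.mul_apply, SemidirectProduct.mul_left,
      SemidirectProduct.mul_right, dualAction_apply, map_mul, Units.val_mul, mul_inv_rev, inv_inv,
      MulAut.mul_apply, mul_assoc]

theorem inducedCharRep_apply (g : K ⋊[φ] H) (f : H → ℂ) (x : H) :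
    inducedCharRep φ θ g f x = (dualAction φ x θ g.left : ℂ) * f (g.right⁻¹ * x) := rfl

variable [Fintype H]

noncomputable def inducedCharFDRep : FDRep ℂ (K ⋊[φ] H) := FDRep.of (inducedCharRep φ θ)

variable {φ θ}

theorem inducedCharFDRep_character (g : K ⋊[φ] H) :
    (inducedCharFDRep φ θ).character g =
      if g.right = 1 then ∑ x, (dualAction φ x θ g.left : ℂ) else 0 := by
  change LinearMap.trace ℂ (H → ℂ) (inducedCharRep φ θ g) = _
  rw [LinearMap.trace_eq_matrix_trace ℂ (Pi.basisFun ℂ H), Matrix.trace]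
  simp only [Matrix.diag_apply, LinearMap.toMatrix_apply, Pi.basisFun_repr, Pi.basisFun_apply,
    inducedCharRep_apply, Pi.single_apply, mul_eq_right, inv_eq_one]
  split_ifs <;> simp

variable [Fintype K]

theorem simple_inducedCharFDRep (hstab : ∀ x, dualAction φ x θ = θ → x = 1) :
    Simple (inducedCharFDRep φ θ) := by
  let : Fintype (K ⋊[φ] H) := Fintype.ofEquiv _ SemidirectProduct.equivProd.symm
  rw [FDRep.simple_iff_char_is_norm_one]
  have hfiber : ∀ y, #{x | dualAction φ x θ = dualAction φ y θ} = 1 := fun y =>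
    card_eq_one.mpr ⟨y, by ext x; simp [(dualAction_injective_of_stabilizer hstab).eq_iff]⟩
  calc ∑ g, (inducedCharFDRep φ θ).character g * (inducedCharFDRep φ θ).character g⁻¹
      = ∑ k, (∑ x, (dualAction φ x θ k : ℂ)) * ∑ y, (((dualAction φ y θ k)⁻¹ : ℂˣ) : ℂ) := by
        rw [← SemidirectProduct.equivProd.symm.sum_comp, Fintype.sum_prod_type]
        refine sum_congr rfl fun k _ => ?_
        rw [sum_eq_single 1 (fun h _ hh => by simp [inducedCharFDRep_character, hh]) (by simp)]
        simp [inducedCharFDRep_character]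
    _ = ∑ y, ∑ k, (∑ x, (dualAction φ x θ k : ℂ)) * ((dualAction φ y θ k)⁻¹ : ℂˣ) := by
        simp_rw [mul_sum]
        exact sum_comm
    _ = Nat.card (K ⋊[φ] H) := by
        simp_rw [sum_sum_apply_mul_inv_apply, hfiber, SemidirectProduct.card]
        simp [Nat.card_eq_fintype_card, mul_comm]

theorem exists_dualAction_pow_eq_pow {a b : ℕ}
    (h : ∀ k, ∑ x, (dualAction φ x θ k : ℂ) ^ a = ∑ x, (dualAction φ x θ k : ℂ) ^ b) :
    ∃ x, dualAction φ x θ ^ a = θ ^ b := by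
  have hcard := card_filter_eq_of_sum_apply_eq (α := fun x => dualAction φ x θ ^ a)
    (γ := fun x => dualAction φ x θ ^ b) (by simpa using h) (θ ^ b)
  have hpos : 0 < #{x | dualAction φ x θ ^ b = θ ^ b} := card_pos.mpr ⟨1, by simp⟩
  obtain ⟨x, hx⟩ := card_pos.mp (hcard ▸ hpos)
  exact ⟨x, (mem_filter.mp hx).2⟩

end InducedRep

section PowersModulo

variable {G : Type*} [Group G] {n : ℕ} {x : G}

theorem pow_eq_pow_of_natCast_eq (hx : x ^ n = 1) {a b : ℕ} (h : (a : ZMod n) = b) :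
    x ^ a = x ^ b :=
  pow_eq_pow_iff_modEq.mpr <|
    ((ZMod.natCast_eq_natCast_iff a b n).mp h).of_dvd (orderOf_dvd_of_pow_eq_one hx)

theorem pow_val_pow_val [NeZero n] (hx : x ^ n = 1) (a b : ZMod n) :
    (x ^ a.val) ^ b.val = x ^ (a * b).val := by
  rw [← pow_mul]
  exact pow_eq_pow_of_natCast_eq hx (by simp only [Nat.cast_mul, ZMod.natCast_zmod_val])

theorem pow_val_inj [NeZero n] (hx : orderOf x = n) {a b : ZMod n} :
    x ^ a.val = x ^ b.val ↔ a = b := by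
  rw [pow_eq_pow_iff_modEq, hx, ← ZMod.natCast_eq_natCast_iff, ZMod.natCast_zmod_val,
    ZMod.natCast_zmod_val]

end PowersModulo

section Fifteen

variable {D H : Type*} [Group D] [Finite D] [Group H] (ψ : H →* MulAut D)
  (hψ : ∀ h ≠ 1, MonoidHom.FixedPointFree (ψ h)) {θ : D} (hθ : orderOf θ = 15) {h : H}
include hψ hθ

theorem eq_one_or_eq_neg_one_of_apply_eq_pow {s : (ZMod 15)ˣ}
    (hs : ψ h θ = θ ^ (s : ZMod 15).val) : s = 1 ∨ s = -1 := by
  have hθ15 : θ ^ 15 = 1 := hθ ▸ pow_orderOf_eq_one θ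
  have hval1 : (1 : ZMod 15).val = 1 := rfl
  have hstab {g : H} {d : D} (hd : d ≠ 1) (hg : ψ g d = d) : g = 1 :=
    by_contra fun hg1 => hd (hψ g hg1 d hg)
  have hsq : ψ (h * h) θ = θ ^ ((s * s : (ZMod 15)ˣ) : ZMod 15).val := by
    rw [map_mul, MulAut.mul_apply, hs, map_pow, hs, pow_val_pow_val hθ15, Units.val_mul]
  have hsquares : ∀ t : (ZMod 15)ˣ, t * t = 1 ∨ ((t * t : (ZMod 15)ˣ) : ZMod 15) = 4 := by decide
  rcases hsquares s with h1 | h4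
  · have hθ1 : θ ≠ 1 := fun h => by simp [h] at hθ
    have hhh : h * h = 1 := hstab hθ1 (by rw [hsq, h1, Units.val_one, hval1, pow_one])
    by_cases hh1 : h = 1
    · have hs1 : θ ^ (s : ZMod 15).val = θ ^ (1 : ZMod 15).val := by
        rw [hval1, pow_one, ← hs, hh1, map_one, MulAut.one_apply]
      exact .inl (Units.ext ((pow_val_inj hθ).mp hs1))
    · have hinv := (hψ h hh1).coe_eq_inv_of_involutive fun d => by
        rw [← MulAut.mul_apply, ← map_mul, hhh, map_one, MulAut.one_apply]
      have hθinv : θ⁻¹ = θ ^ (-1 : ZMod 15).val :=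
        (eq_inv_of_mul_eq_one_left (by rw [← pow_succ]; exact hθ15)).symm
      have hinvθ : ψ h θ = θ⁻¹ := congrFun hinv θ
      rw [hinvθ, hθinv, pow_val_inj hθ] at hs
      exact .inr (Units.ext (by simpa using hs.symm))
  · have h5 : θ ^ 5 ≠ 1 := fun h => by simpa [hθ] using orderOf_dvd_of_pow_eq_one h
    have hhh : h * h = 1 := hstab h5 <| by
      rw [map_pow, hsq, h4, ← pow_mul]
      exact pow_eq_pow_of_natCast_eq hθ15 (by decide)
    have h41 : θ ^ (4 : ZMod 15).val = θ ^ (1 : ZMod 15).val := by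
      rw [hval1, pow_one, ← h4, ← hsq, hhh, map_one, MulAut.one_apply]
    exact absurd ((pow_val_inj hθ).mp h41) (by decide)

theorem eq_or_eq_neg_of_pow_apply_eq_pow {u v : (ZMod 15)ˣ}
    (huv : ψ h θ ^ (u : ZMod 15).val = θ ^ (v : ZMod 15).val) : u = v ∨ u = -v := by
  have hθ15 : θ ^ 15 = 1 := hθ ▸ pow_orderOf_eq_one θ
  have hval1 : (1 : ZMod 15).val = 1 := rfl
  have hs : ψ h θ = θ ^ ((v * u⁻¹ : (ZMod 15)ˣ) : ZMod 15).val := by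
    calc ψ h θ = (ψ h θ ^ (u : ZMod 15).val) ^ ((u⁻¹ : (ZMod 15)ˣ) : ZMod 15).val := by
          rw [pow_val_pow_val (by rw [← map_pow, hθ15, map_one]), ← Units.val_mul,
            mul_inv_cancel, Units.val_one, hval1, pow_one]
      _ = _ := by rw [huv, pow_val_pow_val hθ15, Units.val_mul]
  rcases eq_one_or_eq_neg_one_of_apply_eq_pow ψ hψ hθ hs with h1 | h1
  · exact .inl (mul_inv_eq_one.mp h1).symm
  · exact .inr (by rw [mul_inv_eq_iff_eq_mul, neg_one_mul] at h1; rw [h1, neg_neg])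

end Fifteen

section Cyclotomic

variable {L : Type*} [Field L] [CharZero L] {n : ℕ} [NeZero n] {ζ : L} (hζ : IsPrimitiveRoot ζ n)
include hζ

theorem IsPrimitiveRoot.mem_adjoin_of_pow_eq_one {x : L} (hx : x ^ n = 1) : x ∈ ℚ⟮ζ⟯ := by
  obtain ⟨i, -, rfl⟩ := hζ.eq_pow_of_pow_eq_one hx
  exact pow_mem (mem_adjoin_simple_self ℚ ζ) i

theorem IsPrimitiveRoot.isIntegral_rat : IsIntegral ℚ ζ :=
  (hζ.isIntegral (NeZero.pos n)).tower_top

theorem IsPrimitiveRoot.exists_algHom_adjoin_apply_eq_pow (t : (ZMod n)ˣ) :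
    ∃ σ : ℚ⟮ζ⟯ →ₐ[ℚ] L, ∀ x : ℚ⟮ζ⟯, (x : L) ^ n = 1 → σ x = (x : L) ^ (t : ZMod n).val := by
  have hroot : ζ ^ (t : ZMod n).val ∈ (minpoly ℚ ζ).aroots L := by
    rw [Polynomial.mem_aroots, ← Polynomial.cyclotomic_eq_minpoly_rat hζ (NeZero.pos n),
      Polynomial.aeval_def, Polynomial.eval₂_eq_eval_map, Polynomial.map_cyclotomic]
    exact ⟨Polynomial.cyclotomic_ne_zero n ℚ,
      (hζ.pow_of_coprime _ (ZMod.val_coe_unit_coprime t)).isRoot_cyclotomic (NeZero.pos n)⟩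
  obtain ⟨σ, hgen⟩ : ∃ σ : ℚ⟮ζ⟯ →ₐ[ℚ] L, σ (AdjoinSimple.gen ℚ ζ) = ζ ^ (t : ZMod n).val :=
    ⟨_, algHomAdjoinIntegralEquiv_symm_apply_gen ℚ hζ.isIntegral_rat ⟨_, hroot⟩⟩
  refine ⟨σ, fun x hx => ?_⟩
  obtain ⟨i, -, hi⟩ := hζ.eq_pow_of_pow_eq_one hx
  obtain rfl : x = AdjoinSimple.gen ℚ ζ ^ i := Subtype.ext (by simpa using hi.symm)
  rw [map_pow, hgen, SubmonoidClass.coe_pow, AdjoinSimple.coe_gen, ← pow_mul, ← pow_mul, mul_comm]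

end Cyclotomic

theorem Fintype.exists_apply_eq_ne_ne_neg {α β : Type*} [Fintype α] [Fintype β] [InvolutiveNeg α]
    (f : α → β) (h : Fintype.card β * 2 < Fintype.card α) :
    ∃ u v, f u = f v ∧ u ≠ v ∧ u ≠ -v := by
  obtain ⟨y, hy⟩ := Fintype.exists_lt_card_fiber_of_mul_lt_card f h
  obtain ⟨v, hv⟩ := Finset.card_pos.mp (zero_lt_two.trans hy)
  obtain ⟨u, hu, huv⟩ := exists_mem_notMem_of_card_lt_card ((card_le_two).trans_lt hy)
  simp only [mem_filter, mem_univ, true_and, mem_insert, mem_singleton, not_or] at hu hv huv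
  exact ⟨u, v, hu.trans hv.symm, huv⟩

theorem exists_sum_pow_eq_sum_pow_of_isQuadRat {K H : Type} [Group K] [Group H] [Fintype K]
    [Fintype H] {φ : H →* MulAut K} (hq : IsQuadRat (K ⋊[φ] H)) {θ : K →* ℂˣ} {n : ℕ} [NeZero n]
    (hθ : θ ^ n = 1) (hn : 4 < n.totient) (hstab : ∀ x, dualAction φ x θ = θ → x = 1) :
    ∃ u v : (ZMod n)ˣ, u ≠ v ∧ u ≠ -v ∧ ∀ k, ∑ x, (dualAction φ x θ k : ℂ) ^ (u : ZMod n).val =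
      ∑ x, (dualAction φ x θ k : ℂ) ^ (v : ZMod n).val := by
  set χ := (inducedCharFDRep φ θ).character
  obtain ⟨ζ, hζ⟩ : ∃ ζ : ℂ, IsPrimitiveRoot ζ n := ⟨_, Complex.isPrimitiveRoot_exp n (NeZero.ne n)⟩
  have hroot (x : H) (k : K) : (dualAction φ x θ k : ℂ) ^ n = 1 := by
    rw [← Units.val_pow_eq_pow_val, ← MonoidHom.pow_apply, ← map_pow, hθ, map_one]
    rfl
  have hFE : adjoin ℚ (Set.range χ) ≤ ℚ⟮ζ⟯ := by
    refine adjoin_le_iff.mpr ?_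
    rintro _ ⟨g, rfl⟩
    simp only [χ, inducedCharFDRep_character]
    split_ifs
    exacts [sum_mem fun x _ => hζ.mem_adjoin_of_pow_eq_one (hroot x _), zero_mem _]
  have := adjoin.finiteDimensional hζ.isIntegral_rat
  have : FiniteDimensional ℚ (adjoin ℚ (Set.range χ)) :=
    .of_injective (inclusion hFE).toLinearMap (inclusion_injective hFE)
  have hcard : Fintype.card (adjoin ℚ (Set.range χ) →ₐ[ℚ] ℂ) * 2 < Fintype.card (ZMod n)ˣ := by
    have h2 : Module.finrank ℚ (adjoin ℚ (Set.range χ)) ≤ 2 := hq _ (simple_inducedCharFDRep hstab)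
    rw [AlgHom.card, ZMod.card_units_eq_totient]
    omega
  choose σ hσ using hζ.exists_algHom_adjoin_apply_eq_pow
  obtain ⟨u, v, huv, hne, hne'⟩ :=
    Fintype.exists_apply_eq_ne_ne_neg (fun t => (σ t).comp (inclusion hFE)) hcard
  refine ⟨u, v, hne, hne', fun k => ?_⟩
  have hk : χ ⟨k, 1⟩ ∈ adjoin ℚ (Set.range χ) := subset_adjoin ℚ _ ⟨_, rfl⟩
  have hconj (t : (ZMod n)ˣ) :
      σ t (inclusion hFE ⟨_, hk⟩) = ∑ x, (dualAction φ x θ k : ℂ) ^ (t : ZMod n).val := by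
    have hsum : inclusion hFE ⟨_, hk⟩ = ∑ x, ⟨_, hζ.mem_adjoin_of_pow_eq_one (hroot x k)⟩ :=
      Subtype.ext (by simp [χ, inducedCharFDRep_character])
    rw [hsum, map_sum]
    exact sum_congr rfl fun x _ => hσ t _ (hroot x k)
  rw [← hconj u, ← hconj v]
  exact DFunLike.congr_fun huv ⟨_, hk⟩

theorem kernel_not_div_by_three_and_five_general (K H : Type) [CommGroup K] [Group H]
    [Finite K] [Finite H]
    (φ : H →* MulAut K)
    (hfpf : ∀ h : H, h ≠ 1 → ∀ k : K, φ h k = k → k = 1)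
    (hq : IsQuadRat (SemidirectProduct K H φ)) :
    ¬ (3 ∣ Nat.card K ∧ 5 ∣ Nat.card K) := by
  rintro ⟨h3, h5⟩
  have := Fintype.ofFinite K
  have := Fintype.ofFinite H
  obtain ⟨g, hg⟩ := exists_orderOf_eq_mul_of_prime_dvd_card Nat.prime_three Nat.prime_five
    (by norm_num) h3 h5
  obtain ⟨θ, hθ⟩ := exists_monoidHom_orderOf_eq g
  have hθ15 : orderOf θ = 15 := hθ.trans hg
  have hψ (x : H) (hx : x ≠ 1) : MonoidHom.FixedPointFree (dualAction (M := ℂˣ) φ x) :=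
    fixedPointFree_dualAction (hfpf x⁻¹ (inv_ne_one.mpr hx))
  have hstab (x : H) (hx : dualAction φ x θ = θ) : x = 1 :=
    by_contra fun hx1 => by simp [hψ x hx1 θ hx] at hθ15
  obtain ⟨u, v, huv, huv', hsum⟩ := exists_sum_pow_eq_sum_pow_of_isQuadRat hq
    (hθ15 ▸ pow_orderOf_eq_one θ) (by decide) hstab
  obtain ⟨x, hx⟩ := exists_dualAction_pow_eq_pow hsum
  rcases eq_or_eq_neg_of_pow_apply_eq_pow (dualAction φ) hψ hθ15 hx with h | h
  exacts [huv h, huv' h]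

/-- The kernel of a quadratic rational Frobenius group with abelian kernel and complement
of even order cannot have order divisible by both 3 and 5. -/
theorem kernel_not_div_by_three_and_five (K H : Type) [CommGroup K] [Group H]
    [Finite K] [Finite H] [Nontrivial K] [Nontrivial H]
    (φ : H →* MulAut K)
    (hfpf : ∀ h : H, h ≠ 1 → ∀ k : K, φ h k = k → k = 1)
    (heven : Even (Nat.card H))
    (hq : IsQuadRat (SemidirectProduct K H φ)) :
    ¬ (3 ∣ Nat.card K ∧ 5 ∣ Nat.card K) :=
  kernel_not_div_by_three_and_five_general K H φ hfpf hq
end
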